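/- arXiv:2010.05756 — 3 statements merged into one kernel-verified Lean document; each statement's English description precedes it below -/
import Mathlib

section
/- In a generalized group, for each element a the inverse a^{-1} is unique. -/
/-!
Any two-sided inverse `b` of `a` has the same identity as `a`: `e b` and `e a` absorb each other,
so uniqueness of the identity of the idempotent `e a` gives `e b = e (e a) = e a`. Applying this to
`b` and to `a⁻¹`, associativity gives `b = b (a a⁻¹) = (b a) a⁻¹ = e a · a⁻¹ = a⁻¹`.
-/

/-- A generalized group: an associative operation where each element has its own
unique two-sided identity `e a` and an inverse relative to it. -/
structure GenGroup (G : Type*) where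
  mul : G → G → G
  e : G → G
  inv : G → G
  mul_assoc : ∀ a b c : G, mul (mul a b) c = mul a (mul b c)
  e_mul : ∀ a : G, mul (e a) a = a
  mul_e : ∀ a : G, mul a (e a) = a
  e_unique : ∀ a u : G, mul u a = a → mul a u = a → u = e a
  mul_inv : ∀ a : G, mul a (inv a) = e a
  inv_mul : ∀ a : G, mul (inv a) a = e a

namespace GenGroup

variable {G : Type*} (GG : GenGroup G)

theorem e_mul_self (a : G) : GG.mul (GG.e a) (GG.e a) = GG.e a :=
  GG.e_unique a _ (by rw [GG.mul_assoc, GG.e_mul, GG.e_mul])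
    (by rw [← GG.mul_assoc, GG.mul_e, GG.mul_e])

theorem e_e (a : G) : GG.e (GG.e a) = GG.e a :=
  (GG.e_unique (GG.e a) (GG.e a) (GG.e_mul_self a) (GG.e_mul_self a)).symm

theorem e_eq_of_mul_eq_e {a x : G} (h₁ : GG.mul a x = GG.e a) (h₂ : GG.mul x a = GG.e a) :
    GG.e x = GG.e a := by
  have hl : GG.mul (GG.e x) (GG.e a) = GG.e a := by rw [← h₂, ← GG.mul_assoc, GG.e_mul]
  have hr : GG.mul (GG.e a) (GG.e x) = GG.e a := by rw [← h₁, GG.mul_assoc, GG.mul_e]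
  exact (GG.e_unique (GG.e a) (GG.e x) hl hr).trans (GG.e_e a)

theorem e_inv (a : G) : GG.e (GG.inv a) = GG.e a :=
  GG.e_eq_of_mul_eq_e (GG.mul_inv a) (GG.inv_mul a)

end GenGroup

theorem genGroup_inv_unique_general {G : Type*} (GG : GenGroup G) (a b : G)
    (h1 : GG.mul a b = GG.e a) (h2 : GG.mul b a = GG.e a) :
    b = GG.inv a :=
  calc b = GG.mul b (GG.e b) := (GG.mul_e b).symm
    _ = GG.mul b (GG.mul a (GG.inv a)) := by rw [GG.e_eq_of_mul_eq_e h1 h2, GG.mul_inv]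
    _ = GG.mul (GG.mul b a) (GG.inv a) := (GG.mul_assoc _ _ _).symm
    _ = GG.mul (GG.e (GG.inv a)) (GG.inv a) := by rw [h2, GG.e_inv]
    _ = GG.inv a := GG.e_mul _

/-- In a generalized group, for each element `a` the inverse is unique. -/
theorem genGroup_inv_unique {G : Type*} [Nonempty G] (GG : GenGroup G) (a b : G)
    (h1 : GG.mul a b = GG.e a) (h2 : GG.mul b a = GG.e a) :
    b = GG.inv a :=
  genGroup_inv_unique_general GG a b h1 h2
end

section
/- Every abelian generalized group is a group, i.e., if the binary operation of a generalized group G is commutative, then there is a single two-sided identity element for all of G and every element has an inverse with respect to it. -/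
/-! By commutativity `e a` is a two-sided identity for `a * b`, so uniqueness of identities
gives `e a = e (a * b)`; symmetrically `e b = e (b * a) = e (a * b)`. Hence `e` is constant,
and its value is a global identity for which `inv` supplies inverses. -/

namespace GenGroup

variable {G : Type*} (GG : GenGroup G)

theorem e_eq_e_mul_of_comm (hcomm : ∀ a b : G, GG.mul a b = GG.mul b a) (a b : G) :
    GG.e a = GG.e (GG.mul a b) := by
  apply GG.e_unique
  · rw [← GG.mul_assoc, GG.e_mul]
  · rw [hcomm a b, GG.mul_assoc, GG.mul_e]

theorem e_eq_e_of_comm (hcomm : ∀ a b : G, GG.mul a b = GG.mul b a) (a b : G) :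
    GG.e a = GG.e b := by
  rw [GG.e_eq_e_mul_of_comm hcomm a b, GG.e_eq_e_mul_of_comm hcomm b a, hcomm a b]

end GenGroup

/-- Every abelian generalized group is a group: there is a single two-sided
identity for all of `G` and every element is invertible with respect to it. -/
theorem abelian_genGroup_is_group {G : Type*} [Nonempty G] (GG : GenGroup G)
    (hcomm : ∀ a b : G, GG.mul a b = GG.mul b a) :
    ∃ one : G, (∀ a : G, GG.mul a one = a ∧ GG.mul one a = a) ∧
      (∀ a : G, ∃ b : G, GG.mul a b = one ∧ GG.mul b a = one) := by
  obtain ⟨x⟩ := ‹Nonempty G›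
  have e_eq (a : G) : GG.e a = GG.e x := GG.e_eq_e_of_comm hcomm a x
  refine ⟨GG.e x, fun a => ?_, fun a => ⟨GG.inv a, ?_, ?_⟩⟩
  · rw [← e_eq a]
    exact ⟨GG.mul_e a, GG.e_mul a⟩
  · rw [GG.mul_inv, e_eq a]
  · rw [GG.inv_mul, e_eq a]
end

section
/- Let G be a connected groupoid and suppose for each pair of objects a, b a morphism h_{ab} ∈ G(a,b) is chosen such that h_{ba} = h_{ab}^{-1} and h_{aa} = 1_a. Then G with the operation f + g = f ∘ h_{b c} ∘ g (for f: a → b, g: c → d) is a generalized group, in which e(f) = h_{ab} and -f = h_{ab} ∘ f^{-1} ∘ h_{ab} for f: a → b. -/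
open CategoryTheory

theorem CategoryTheory.eq_inv_of_comp_comp_eq_self {C : Type*} [Category C] {X Y W : C}
    {u : X ⟶ Y} {k : Y ⟶ X} [IsIso k] {f : X ⟶ W} [Mono f] (huf : u ≫ k ≫ f = f) :
    u = inv k :=
  IsIso.eq_inv_of_inv_hom_id <| (cancel_mono f).mp <| show (u ≫ k) ≫ f = 𝟙 X ≫ f by
    rw [Category.assoc, huf, Category.id_comp]

namespace CategoryTheory.Groupoid

variable {C : Type*} [Groupoid C]

def bridgedMul (h : ∀ a b : C, a ⟶ b) (x y : Σ a b : C, a ⟶ b) : Σ a b : C, a ⟶ b :=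
  ⟨x.1, y.2.1, x.2.2 ≫ h x.2.1 y.1 ≫ y.2.2⟩

@[simp]
theorem bridgedMul_mk (h : ∀ a b : C, a ⟶ b) {a b c d : C} (f : a ⟶ b) (g : c ⟶ d) :
    bridgedMul h ⟨a, b, f⟩ ⟨c, d, g⟩ = ⟨a, d, f ≫ h b c ≫ g⟩ :=
  rfl

theorem bridgedMul_assoc (h : ∀ a b : C, a ⟶ b) (x y z : Σ a b : C, a ⟶ b) :
    bridgedMul h (bridgedMul h x y) z = bridgedMul h x (bridgedMul h y z) := by
  obtain ⟨_, _, _⟩ := x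
  obtain ⟨_, _, _⟩ := y
  obtain ⟨_, _, _⟩ := z
  simp

theorem bridge_comp_bridge_symm {h : ∀ a b : C, a ⟶ b}
    (hinv : ∀ a b : C, h b a = Groupoid.inv (h a b)) (a b : C) : h a b ≫ h b a = 𝟙 a := by
  simp [hinv a b, Groupoid.inv_eq_inv]

theorem bridge_comp_bridge_symm_assoc {h : ∀ a b : C, a ⟶ b}
    (hinv : ∀ a b : C, h b a = Groupoid.inv (h a b)) (a b : C) {X : C} (f : a ⟶ X) :
    h a b ≫ h b a ≫ f = f := by
  rw [← Category.assoc, bridge_comp_bridge_symm hinv, Category.id_comp]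

theorem bridge_unique {h : ∀ a b : C, a ⟶ b} (hinv : ∀ a b : C, h b a = Groupoid.inv (h a b))
    (x u : Σ a b : C, a ⟶ b) (hux : bridgedMul h u x = x) (hxu : bridgedMul h x u = x) :
    u = ⟨x.1, x.2.1, h x.1 x.2.1⟩ := by
  obtain ⟨p, q, f⟩ := x
  obtain ⟨a, b, u⟩ := u
  obtain rfl : a = p := congrArg Sigma.fst hux
  obtain rfl : b = q := congrArg (fun z => z.2.1) hxu
  have hu : u ≫ h b a ≫ f = f := by simpa using hux
  rw [eq_inv_of_comp_comp_eq_self hu, ← Groupoid.inv_eq_inv, ← hinv]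

def bridgedGenGroup (h : ∀ a b : C, a ⟶ b) (hinv : ∀ a b : C, h b a = Groupoid.inv (h a b)) :
    GenGroup (Σ a b : C, a ⟶ b) where
  mul := bridgedMul h
  e x := ⟨x.1, x.2.1, h x.1 x.2.1⟩
  inv x := ⟨x.1, x.2.1, h x.1 x.2.1 ≫ Groupoid.inv x.2.2 ≫ h x.1 x.2.1⟩
  mul_assoc := bridgedMul_assoc h
  e_mul := by rintro ⟨a, b, f⟩; simp [bridge_comp_bridge_symm_assoc hinv]
  mul_e := by rintro ⟨a, b, f⟩; simp [bridge_comp_bridge_symm hinv]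
  e_unique := bridge_unique hinv
  mul_inv := by rintro ⟨a, b, f⟩; simp [bridge_comp_bridge_symm_assoc hinv]
  inv_mul := by rintro ⟨a, b, f⟩; simp [bridge_comp_bridge_symm_assoc hinv]

end CategoryTheory.Groupoid

open CategoryTheory in
theorem connected_groupoid_genGroup_general {C : Type*} [Groupoid C]
    (h : ∀ a b : C, a ⟶ b)
    (hinv : ∀ a b : C, h b a = Groupoid.inv (h a b)) :
    ∃ GG : GenGroup (Σ a b : C, a ⟶ b),
      (∀ (a b c d : C) (f : a ⟶ b) (g : c ⟶ d),
        GG.mul ⟨a, b, f⟩ ⟨c, d, g⟩ = ⟨a, d, f ≫ h b c ≫ g⟩) ∧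
      (∀ (a b : C) (f : a ⟶ b), GG.e ⟨a, b, f⟩ = ⟨a, b, h a b⟩) ∧
      (∀ (a b : C) (f : a ⟶ b),
        GG.inv ⟨a, b, f⟩ = ⟨a, b, h a b ≫ Groupoid.inv f ≫ h a b⟩) :=
  ⟨Groupoid.bridgedGenGroup h hinv, fun _ _ _ _ _ _ => rfl, fun _ _ _ => rfl, fun _ _ _ => rfl⟩

open CategoryTheory in
/-- A connected groupoid `C` with a chosen morphism `h a b : a ⟶ b` for each pair of
objects, satisfying `h b a = (h a b)⁻¹` and `h a a = 𝟙 a`, is a generalized group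
on its set of morphisms under `f + g = f ≫ h b c ≫ g` (for `f : a ⟶ b`, `g : c ⟶ d`),
with `e f = h a b` and `-f = h a b ≫ f⁻¹ ≫ h a b` for `f : a ⟶ b`. -/
theorem connected_groupoid_genGroup {C : Type*} [Groupoid C]
    (h : ∀ a b : C, a ⟶ b)
    (hinv : ∀ a b : C, h b a = Groupoid.inv (h a b))
    (hid : ∀ a : C, h a a = 𝟙 a) :
    ∃ GG : GenGroup (Σ a b : C, a ⟶ b),
      (∀ (a b c d : C) (f : a ⟶ b) (g : c ⟶ d),
        GG.mul ⟨a, b, f⟩ ⟨c, d, g⟩ = ⟨a, d, f ≫ h b c ≫ g⟩) ∧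
      (∀ (a b : C) (f : a ⟶ b), GG.e ⟨a, b, f⟩ = ⟨a, b, h a b⟩) ∧
      (∀ (a b : C) (f : a ⟶ b),
        GG.inv ⟨a, b, f⟩ = ⟨a, b, h a b ≫ Groupoid.inv f ≫ h a b⟩) :=
  connected_groupoid_genGroup_general h hinv
end
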